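/- arXiv:2002.05964 — 5 statements merged into one kernel-verified Lean document; each statement's English description precedes it below -/
import Mathlib

section
/- Let X be a subshift over alphabet A and let u, v ∈ L(X) be synchronizing words. If w₁, w₂ ∈ L(X) both have u as a prefix and v as a suffix, then w₁ and w₂ have the same set of contexts, i.e. for all t₁, t₂ ∈ L(X), t₁w₁t₂ ∈ L(X) if and only if t₁w₂t₂ ∈ L(X). -/
/-- The shift map on bi-infinite sequences. -/
def shiftMap {A : Type*} (x : ℤ → A) : ℤ → A := fun i => x (i + 1)

/-- The `k`-fold shift map (`σ^k`). -/
def shiftPow {A : Type*} (k : ℤ) (x : ℤ → A) : ℤ → A := fun i => x (i + k)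

/-- A subshift: a closed shift-invariant subset of `A^ℤ`. -/
def IsSubshift {A : Type*} [TopologicalSpace A] (X : Set (ℤ → A)) : Prop :=
  IsClosed X ∧ shiftMap '' X = X

/-- The word `w` occurs in `x` at position `i`. -/
def occursAt {A : Type*} (x : ℤ → A) (w : List A) (i : ℤ) : Prop :=
  ∀ (k : ℕ) (hk : k < w.length), x (i + k) = w.get ⟨k, hk⟩

/-- `w` belongs to the language of `X`. -/
def InLang {A : Type*} (X : Set (ℤ → A)) (w : List A) : Prop :=
  ∃ x ∈ X, occursAt x w 0

/-- The set of contexts of a word with respect to `X`. -/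
def contexts {A : Type*} (X : Set (ℤ → A)) (w : List A) : Set (List A × List A) :=
  {p | InLang X (p.1 ++ w ++ p.2)}

/-- `w` is a synchronizing word of `X`. -/
def IsSynchronizing {A : Type*} (X : Set (ℤ → A)) (w : List A) : Prop :=
  InLang X w ∧ ∀ u v : List A, InLang X (u ++ w) → InLang X (w ++ v) → InLang X (u ++ w ++ v)

/-- `X` is a transitive subshift. -/
def IsTransitiveSubshift {A : Type*} (X : Set (ℤ → A)) : Prop :=
  ∀ u v : List A, InLang X u → InLang X v → ∃ w : List A, InLang X (u ++ w ++ v)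

/-- A reversible cellular automaton (automorphism) of the subshift `X`. -/
def IsAutomorphism {A : Type*} [TopologicalSpace A] (X : Set (ℤ → A))
    (F : (ℤ → A) → (ℤ → A)) : Prop :=
  Set.MapsTo F X X ∧ ContinuousOn F X ∧ (∀ x ∈ X, F (shiftMap x) = shiftMap (F x)) ∧
  ∃ G : (ℤ → A) → (ℤ → A), Set.MapsTo G X X ∧ ContinuousOn G X ∧
    (∀ x ∈ X, G (shiftMap x) = shiftMap (G x)) ∧
    (∀ x ∈ X, G (F x) = x) ∧ (∀ x ∈ X, F (G x) = x)

/-- `F` is given on `X` by a local rule of radius `r`. -/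
def HasRadius {A : Type*} (X : Set (ℤ → A)) (F : (ℤ → A) → (ℤ → A)) (r : ℕ) : Prop :=
  ∃ f : (Fin (2 * r + 1) → A) → A, ∀ x ∈ X, ∀ i : ℤ, F x i = f (fun k => x (i - r + k))

/-- `x` is an equicontinuity point of `(X, F)` (combinatorial formulation). -/
def IsEquicontinuityPoint {A : Type*} (X : Set (ℤ → A)) (F : (ℤ → A) → (ℤ → A))
    (x : ℤ → A) : Prop :=
  x ∈ X ∧ ∀ N : ℕ, ∃ M : ℕ, ∀ y ∈ X, (∀ j : ℤ, |j| ≤ (M : ℤ) → y j = x j) →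
    ∀ t : ℕ, ∀ j : ℤ, |j| ≤ (N : ℤ) → F^[t] y j = F^[t] x j

theorem shiftMap_iterate_apply {A : Type*} (n : ℕ) (x : ℤ → A) (i : ℤ) :
    shiftMap^[n] x i = x (i + n) := by
  induction n generalizing x with
  | zero => simp
  | succ n ih =>
    rw [Function.iterate_succ_apply, ih, shiftMap, Nat.cast_succ, add_assoc]

theorem IsSubshift.shiftMap_iterate_mem {A : Type*} [TopologicalSpace A] {X : Set (ℤ → A)}
    (hX : IsSubshift X) (n : ℕ) {x : ℤ → A} (hx : x ∈ X) : shiftMap^[n] x ∈ X := by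
  induction n with
  | zero => exact hx
  | succ n ih => rw [Function.iterate_succ_apply', ← hX.2]; exact ⟨_, ih, rfl⟩

theorem InLang.of_isPrefix {A : Type*} {X : Set (ℤ → A)} {w w' : List A}
    (h : InLang X w) (hw' : w' <+: w) : InLang X w' := by
  obtain ⟨x, hx, hocc⟩ := h
  refine ⟨x, hx, fun k hk => ?_⟩
  rw [hocc k (lt_of_lt_of_le hk hw'.length_le)]
  exact (hw'.getElem hk).symm

theorem InLang.of_isSuffix {A : Type*} [TopologicalSpace A] {X : Set (ℤ → A)}
    (hX : IsSubshift X) {w w' : List A} (h : InLang X w) (hw' : w' <:+ w) : InLang X w' := by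
  obtain ⟨p, rfl⟩ := hw'
  obtain ⟨x, hx, hocc⟩ := h
  refine ⟨shiftMap^[p.length] x, hX.shiftMap_iterate_mem _ hx, fun k hk => ?_⟩
  have hk' : p.length + k < (p ++ w').length := by simpa using hk
  rw [shiftMap_iterate_apply, add_assoc, ← Nat.cast_add, add_comm k, hocc _ hk']
  simp [List.getElem_append_right]

theorem IsSynchronizing.inLang_append_of_isPrefix {A : Type*} {X : Set (ℤ → A)}
    {u s t : List A} (hu : IsSynchronizing X u) (hus : u <+: s) (hs : InLang X s)
    (h : InLang X (t ++ u)) : InLang X (t ++ s) := by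
  obtain ⟨r, rfl⟩ := hus
  simpa only [List.append_assoc] using hu.2 t r h hs

theorem IsSynchronizing.inLang_append_of_isSuffix {A : Type*} {X : Set (ℤ → A)}
    {v s t : List A} (hv : IsSynchronizing X v) (hvs : v <:+ s) (hs : InLang X s)
    (h : InLang X (v ++ t)) : InLang X (s ++ t) := by
  obtain ⟨p, rfl⟩ := hvs
  exact hv.2 p t hs h

theorem inLang_append_append_of_synchronizing {A : Type*} [TopologicalSpace A]
    {X : Set (ℤ → A)} (hX : IsSubshift X) {u v w₁ w₂ : List A}
    (hu : IsSynchronizing X u) (hv : IsSynchronizing X v) (hw₂ : InLang X w₂)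
    (hu₁ : u <+: w₁) (hu₂ : u <+: w₂) (hv₁ : v <:+ w₁) (hv₂ : v <:+ w₂) {t₁ t₂ : List A}
    (h : InLang X (t₁ ++ w₁ ++ t₂)) : InLang X (t₁ ++ w₂ ++ t₂) := by
  have htu : InLang X (t₁ ++ u) :=
    h.of_isPrefix (((List.prefix_append_right_inj t₁).2 hu₁).trans (List.prefix_append _ _))
  have hvt : InLang X (v ++ t₂) := by
    obtain ⟨q, rfl⟩ := hv₁
    exact h.of_isSuffix hX ⟨t₁ ++ q, by simp⟩
  have htw₂ : InLang X (t₁ ++ w₂) := hu.inLang_append_of_isPrefix hu₂ hw₂ htu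
  exact hv.inLang_append_of_isSuffix (hv₂.trans (List.suffix_append _ _)) htw₂ hvt

theorem stmt0_general {A : Type*} [TopologicalSpace A]
    (X : Set (ℤ → A)) (hX : IsSubshift X)
    (u v : List A) (hu : IsSynchronizing X u) (hv : IsSynchronizing X v)
    (w₁ w₂ : List A) (hw₁ : InLang X w₁) (hw₂ : InLang X w₂)
    (hu₁ : u <+: w₁) (hu₂ : u <+: w₂) (hv₁ : v <:+ w₁) (hv₂ : v <:+ w₂) :
    ∀ t₁ t₂ : List A, InLang X (t₁ ++ w₁ ++ t₂) ↔ InLang X (t₁ ++ w₂ ++ t₂) :=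
  fun _ _ =>
    ⟨inLang_append_append_of_synchronizing hX hu hv hw₂ hu₁ hu₂ hv₁ hv₂,
      inLang_append_append_of_synchronizing hX hu hv hw₁ hu₂ hu₁ hv₂ hv₁⟩

/-- If `u, v` are synchronizing words of a subshift `X` and `w₁, w₂ ∈ L(X)`
both have `u` as a prefix and `v` as a suffix, then `w₁` and `w₂` have the same contexts. -/
theorem stmt0 {A : Type*} [TopologicalSpace A] [DiscreteTopology A]
    (X : Set (ℤ → A)) (hX : IsSubshift X)
    (u v : List A) (hu : IsSynchronizing X u) (hv : IsSynchronizing X v)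
    (w₁ w₂ : List A) (hw₁ : InLang X w₁) (hw₂ : InLang X w₂)
    (hu₁ : u <+: w₁) (hu₂ : u <+: w₂) (hv₁ : v <:+ w₁) (hv₂ : v <:+ w₂) :
    ∀ t₁ t₂ : List A, InLang X (t₁ ++ w₁ ++ t₂) ↔ InLang X (t₁ ++ w₂ ++ t₂) :=
  stmt0_general X hX u v hu hv w₁ w₂ hw₁ hw₂ hu₁ hu₂ hv₁ hv₂
end

section
/- Let X ⊆ A^ℤ be a subshift, u ∈ L(X), and W a finite set of words such that uWu ⊆ L(X) and each pair of (not necessarily distinct) elements of uWu has only u as an overlap besides the trivial overlaps. Let π: uWu → uWu be a permutation preserving word length and syntactic class. Then there is a reversible cellular automaton F: X → X such that for every x ∈ X, F(x) is obtained from x by replacing every occurrence of each w ∈ uWu by π(w); moreover elements of uWu occur in F(x) at exactly the same positions as in x. -/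
/-- `w` is an overlap of `u` and `v`. -/
def IsOverlap {A : Type*} (u v w : List A) : Prop :=
  (w <:+ u ∧ w <+: v) ∨ (w = u ∧ u <:+: v) ∨ (w = v ∧ v <:+: u)

/-- `w` is a trivial overlap of `u` and `v`. -/
def IsTrivialOverlap {A : Type*} (u v w : List A) : Prop :=
  w = [] ∨ (w = u ∧ w = v)


/-!
Every marker word `u w u` begins and ends with `u`, and two distinct occurrences of marker words
can only overlap along one common copy of `u`. Hence writing `π v` over every occurrence of every
marker `v` is consistent, and it is a block map whose radius is the maximal marker length. Each
marker occurrence in the image sits where an occurrence of its `π`-preimage sat, so the map built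
from `π⁻¹` inverts it. The image stays in `X` because `X` is closed and each finite window of the
image arises from a window of a point of `X` by finitely many substitutions of a word by a word
with the same contexts.
-/

section

variable {A : Type*}

theorem occursAt_shiftMap {x : ℤ → A} {v : List A} {i : ℤ} :
    occursAt (shiftMap x) v i ↔ occursAt x v (i + 1) := by
  simp only [occursAt, shiftMap, add_right_comm]

def window (x : ℤ → A) (a : ℤ) (m : ℕ) : List A := List.ofFn fun k : Fin m => x (a + k)

section Window

variable {x y : ℤ → A} {a : ℤ} {m n : ℕ} {v w : List A}

@[simp]
theorem length_window : (window x a m).length = m := by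
  simp [window]

@[simp]
theorem getElem_window {k : ℕ} (hk : k < (window x a m).length) :
    (window x a m)[k] = x (a + k) := by
  simp [window]

theorem occursAt_iff_window_eq : occursAt x v a ↔ window x a v.length = v := by
  refine ⟨fun h => List.ext_getElem (by simp) fun k hk _ => ?_, fun h k hk => ?_⟩
  · simpa using h k (by simpa using hk)
  · rw [List.get_eq_getElem, ← List.getElem_of_eq h (by simpa), getElem_window]

theorem window_add : window x a (m + n) = window x a m ++ window x (a + m) n := by
  refine List.ext_getElem (by simp) fun k hk _ => ?_
  simp only [length_window] at hk
  rcases lt_or_ge k m with hkm | hkm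
  · rw [List.getElem_append_left (by simpa using hkm)]
    simp
  · rw [List.getElem_append_right (by simpa using hkm)]
    simp only [getElem_window, length_window]
    congr 1
    omega

theorem occursAt_append {i : ℤ} :
    occursAt x (v ++ w) i ↔ occursAt x v i ∧ occursAt x w (i + v.length) := by
  simp only [occursAt_iff_window_eq, List.length_append, window_add]
  exact ⟨fun h => List.append_inj h (by simp), fun h => by rw [h.1, h.2]⟩

theorem occursAt_window : occursAt x (window x a m) a :=
  occursAt_iff_window_eq.2 (by rw [length_window])

theorem window_congr (h : ∀ k < m, x (a + k) = y (a + k)) : window x a m = window y a m := by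
  unfold window
  congr 1
  ext k
  exact h k k.2

theorem window_isInfix {b : ℤ} (hab : a ≤ b) (hm : b + n ≤ a + m) :
    window x b n <:+: window x a m := by
  obtain ⟨d, rfl⟩ : ∃ d : ℕ, b = a + d := ⟨(b - a).toNat, by omega⟩
  obtain ⟨e, rfl⟩ : ∃ e : ℕ, m = d + n + e := ⟨m - (d + n), by omega⟩
  rw [window_add, window_add]
  exact ⟨window x a d, window x (a + d + n) e, by rw [Nat.cast_add, ← add_assoc]⟩

end Window

def occurrences (S : Set (List A)) (x : ℤ → A) : Set (List A × ℤ) :=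
  {q | q.1 ∈ S ∧ occursAt x q.1 q.2}

theorem Set.SurjOn.invariant_invFunOn {α β : Type*} [Nonempty α] {f : α → α} {s t : Set α}
    (hf : SurjOn f s t) {g : α → β} (hg : ∀ a ∈ s, g (f a) = g a) :
    ∀ b ∈ t, g (Function.invFunOn f s b) = g b := fun b hb => by
  rw [← hg _ (hf.mapsTo_invFunOn hb), hf.rightInvOn_invFunOn hb]

namespace IsSubshift

variable [TopologicalSpace A] {X : Set (ℤ → A)} {x : ℤ → A} {v w : List A}

theorem shiftMap_mem (hX : IsSubshift X) (hx : x ∈ X) : shiftMap x ∈ X :=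
  hX.2 ▸ Set.mem_image_of_mem shiftMap hx

theorem shiftPow_mem (hX : IsSubshift X) (hx : x ∈ X) (k : ℤ) : shiftPow k x ∈ X := by
  induction k using Int.induction_on with
  | zero =>
    convert hx using 1
    funext i
    simp [shiftPow]
  | succ k ih =>
    convert hX.shiftMap_mem ih using 1
    funext i
    simp only [shiftPow, shiftMap, add_assoc, add_comm (1 : ℤ)]
  | pred k ih =>
    obtain ⟨y, hy, hyx⟩ := hX.2.symm ▸ ih
    convert hy using 1
    funext i
    have := congrFun hyx (i - 1)
    simp only [shiftMap, shiftPow, sub_add_cancel] at this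
    simp only [shiftPow, this]
    ring_nf

theorem inLang_of_occursAt (hX : IsSubshift X) (hx : x ∈ X) {i : ℤ} (h : occursAt x v i) :
    InLang X v :=
  ⟨shiftPow i x, hX.shiftPow_mem hx i, fun k hk => by
    simpa [shiftPow, add_comm] using h k hk⟩

theorem inLang_of_isInfix (hX : IsSubshift X) (h : InLang X w) (hvw : v <:+: w) : InLang X v := by
  obtain ⟨y, hy, hyw⟩ := h
  obtain ⟨s, t, rfl⟩ := hvw
  exact hX.inLang_of_occursAt hy (occursAt_append.1 (occursAt_append.1 hyw).1).2

theorem inLang_window (hX : IsSubshift X) (hx : x ∈ X) (a : ℤ) (m : ℕ) :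
    InLang X (window x a m) :=
  hX.inLang_of_occursAt hx occursAt_window

theorem inLang_window_of_le (hX : IsSubshift X) {a b : ℤ} {m n : ℕ}
    (h : InLang X (window x a m)) (hab : a ≤ b) (hm : b + n ≤ a + m) : InLang X (window x b n) :=
  hX.inLang_of_isInfix h (window_isInfix hab hm)

theorem mem_of_forall_inLang_window (hX : IsSubshift X)
    (h : ∀ a m, InLang X (window x a m)) : x ∈ X := by
  have approx : ∀ n : ℕ, ∃ y ∈ X, ∀ j : ℤ, -n ≤ j → j ≤ n → y j = x j := fun n => by
    obtain ⟨z, hz, hzx⟩ := h (-n) (2 * n + 1)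
    refine ⟨shiftPow n z, hX.shiftPow_mem hz _, fun j hj₁ hj₂ => ?_⟩
    have := hzx (j + n).toNat (by simp; omega)
    simp only [List.get_eq_getElem, getElem_window] at this
    simp only [shiftPow]
    convert this using 2 <;> omega
  choose y hyX hyx using approx
  have hlim : Filter.Tendsto y Filter.atTop (nhds x) := tendsto_pi_nhds.2 fun j => by
    refine tendsto_const_nhds.congr' ?_
    filter_upwards [Filter.eventually_ge_atTop j.natAbs] with n hn
    exact (hyx n j (by omega) (by omega)).symm
  exact hX.1.mem_of_tendsto hlim (Filter.Eventually.of_forall hyX)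

theorem mem_of_replace (hX : IsSubshift X) {x' : ℤ → A} (hx : x ∈ X) {v' : List A} {i : ℤ}
    (hv : occursAt x v i) (hv' : occursAt x' v' i) (hlen : v'.length = v.length)
    (hctx : contexts X v ⊆ contexts X v')
    (hout : ∀ j, j < i ∨ i + v.length ≤ j → x' j = x j) : x' ∈ X := by
  refine hX.mem_of_forall_inLang_window fun a m => ?_
  set N := (a - i).natAbs + m
  set p := window x (i - N) N
  set s := window x (i + v.length) N
  have hp : window x' (i - N) N = p := window_congr fun k hk => hout _ (.inl (by omega))
  have hs : window x' (i + v.length) N = s := window_congr fun k hk => hout _ (.inr (by omega))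
  have hpvs : occursAt x (p ++ v ++ s) (i - N) := by
    refine occursAt_append.2 ⟨occursAt_append.2 ⟨occursAt_window, by simpa [p] using hv⟩, ?_⟩
    convert occursAt_window (x := x) (a := i + v.length) (m := N) using 1
    simp [p]
    ring
  have hpvs' : occursAt x' (p ++ v' ++ s) (i - N) := by
    refine occursAt_append.2 ⟨occursAt_append.2 ⟨hp ▸ occursAt_window, by simpa [p] using hv'⟩, ?_⟩
    have hs' := occursAt_window (x := x') (a := i + v.length) (m := N)
    rw [hs] at hs'
    convert hs' using 1
    simp [p, hlen]
    ring
  have hL : InLang X (p ++ v' ++ s) := hctx (show (p, s) ∈ contexts X v from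
    hX.inLang_of_occursAt hx hpvs)
  rw [← occursAt_iff_window_eq.1 hpvs'] at hL
  exact hX.inLang_window_of_le hL (by omega) (by simp [p, s, hlen]; omega)

end IsSubshift

structure IsMarkerSet (u : List A) (S : Set (List A)) : Prop where
  exists_eq_append : ∀ v ∈ S, ∃ w, v = u ++ w ++ u
  overlap : ∀ v₁ ∈ S, ∀ v₂ ∈ S, ∀ v, IsOverlap v₁ v₂ v → IsTrivialOverlap v₁ v₂ v ∨ v = u

namespace IsMarkerSet

variable {u : List A} {S : Set (List A)} {x : ℤ → A} {v v₁ v₂ : List A}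

theorem two_mul_length_le (hS : IsMarkerSet u S) (hv : v ∈ S) : 2 * u.length ≤ v.length := by
  obtain ⟨w, rfl⟩ := hS.exists_eq_append v hv
  simp only [List.length_append]
  omega

theorem getElem_eq_of_lt (hS : IsMarkerSet u S) (hv : v ∈ S) {k : ℕ} (hk : k < u.length)
    (hkv : k < v.length) : v[k] = u[k] := by
  obtain ⟨w, rfl⟩ := hS.exists_eq_append v hv
  rw [List.getElem_append_left (by simp; omega), List.getElem_append_left hk]

theorem getElem_eq_of_le (hS : IsMarkerSet u S) (hv : v ∈ S) {k : ℕ}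
    (hk : v.length ≤ k + u.length) (hkv : k < v.length) :
    v[k] = u[k + u.length - v.length]'(by omega) := by
  obtain ⟨w, rfl⟩ := hS.exists_eq_append v hv
  simp only [List.length_append] at hk hkv
  rw [List.getElem_append_right (by simp; omega)]
  congr 1
  simp only [List.length_append]
  omega

theorem overlap_cases (hS : IsMarkerSet u S) (h₁ : v₁ ∈ S) (h₂ : v₂ ∈ S) {i : ℤ} {d : ℕ}
    (o₁ : occursAt x v₁ i) (o₂ : occursAt x v₂ (i + d)) (hd : d < v₁.length) (hv₂ : v₂ ≠ []) :
    (d = 0 ∧ v₁ = v₂) ∨ d + u.length = v₁.length := by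
  rw [occursAt_iff_window_eq] at o₁ o₂
  have hv₂len : 0 < v₂.length := List.length_pos_iff.2 hv₂
  rcases le_or_gt (d + v₂.length) v₁.length with hin | hout
  · have hinf : v₂ <:+: v₁ := o₁ ▸ o₂ ▸ window_isInfix (by omega) (by omega)
    rcases hS.overlap v₁ h₁ v₂ h₂ v₂ (.inr (.inr ⟨rfl, hinf⟩)) with (h | ⟨h, h'⟩) | h
    · exact absurd h hv₂
    · have := congrArg List.length h
      exact .inl ⟨by omega, h.symm⟩
    · have := hS.two_mul_length_le h₂
      rw [h] at hv₂len this
      omega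
  · set c := window x (i + d) (v₁.length - d)
    have hsuf : c <:+ v₁ := by
      have := window_add (x := x) (a := i) (m := d) (n := v₁.length - d)
      rw [Nat.add_sub_cancel' hd.le, o₁] at this
      exact ⟨_, this.symm⟩
    have hpre : c <+: v₂ := by
      have := window_add (x := x) (a := i + d) (m := v₁.length - d)
        (n := v₂.length - (v₁.length - d))
      rw [Nat.add_sub_cancel' (by omega), o₂] at this
      exact ⟨_, this.symm⟩
    rcases hS.overlap v₁ h₁ v₂ h₂ c (.inl ⟨hsuf, hpre⟩) with (h | ⟨h, h'⟩) | h
    · have := congrArg List.length h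
      simp [c] at this
      omega
    · have := congrArg List.length h
      have := congrArg List.length h'
      simp [c] at *
      omega
    · have := congrArg List.length h
      simp [c] at this
      omega

theorem eq_of_occursAt (hS : IsMarkerSet u S) (h₁ : v₁ ∈ S) (h₂ : v₂ ∈ S) {i : ℤ}
    (o₁ : occursAt x v₁ i) (o₂ : occursAt x v₂ i) (hv₁ : v₁ ≠ []) (hv₂ : v₂ ≠ []) : v₁ = v₂ := by
  have hpos := List.length_pos_iff.2 hv₁
  rcases hS.overlap_cases h₁ h₂ (d := 0) o₁ (by simpa using o₂) hpos hv₂ with h | h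
  · exact h.2
  · have := hS.two_mul_length_le h₁
    omega

theorem getElem_eq_of_ne (hS : IsMarkerSet u S) {q₁ q₂ : List A × ℤ}
    (h₁ : q₁ ∈ occurrences S x) (h₂ : q₂ ∈ occurrences S x) (hne : q₁ ≠ q₂) {k₁ k₂ : ℕ}
    (hk₁ : k₁ < q₁.1.length) (hk₂ : k₂ < q₂.1.length) (hj : q₁.2 + k₁ = q₂.2 + k₂)
    (hv₁ : v₁ ∈ S) (hv₂ : v₂ ∈ S) (hl₁ : v₁.length = q₁.1.length)
    (hl₂ : v₂.length = q₂.1.length) : v₁[k₁] = v₂[k₂] := by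
  wlog hk : k₂ ≤ k₁ generalizing q₁ q₂ k₁ k₂ v₁ v₂
  · exact (this h₂ h₁ hne.symm hk₂ hk₁ hj.symm hv₂ hv₁ hl₂ hl₁ (by omega)).symm
  have hq₂ : q₂.2 = q₁.2 + (k₁ - k₂ : ℕ) := by omega
  rcases hS.overlap_cases h₁.1 h₂.1 h₁.2 (hq₂ ▸ h₂.2) (by omega)
    (List.ne_nil_of_length_pos (by omega)) with ⟨hd, heq⟩ | hd
  · exact absurd (Prod.ext heq (by omega)) hne
  · rw [hS.getElem_eq_of_le hv₁ (by omega) (by omega),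
      hS.getElem_eq_of_lt hv₂ (by omega) (by omega)]
    congr 1
    omega

end IsMarkerSet

structure IsRecoding (S : Set (List A)) (ρ : List A → List A) : Prop where
  mapsTo : Set.MapsTo ρ S S
  length_eq : ∀ v ∈ S, (ρ v).length = v.length

open Classical in
/-- `h.choose` is any occurrence in `T` covering `j`; for `T ⊆ occurrences S x` the value does not
depend on that choice (`getD_eq_getD_of_overlap`). -/
noncomputable def replace (ρ : List A → List A) (T : Set (List A × ℤ)) (x : ℤ → A) (j : ℤ) : A :=
  if h : ∃ q ∈ T, ∃ k < q.1.length, j = q.2 + k then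
    (ρ h.choose.1).getD (j - h.choose.2).toNat (x j)
  else x j

noncomputable def replaceAll (ρ : List A → List A) (S : Set (List A)) (x : ℤ → A) : ℤ → A :=
  replace ρ (occurrences S x) x

section Replace

variable {u : List A} {S : Set (List A)} {ρ : List A → List A} {T : Set (List A × ℤ)}
  {x : ℤ → A} {q q₁ q₂ : List A × ℤ} {j : ℤ} {k k₁ k₂ : ℕ}

theorem replace_of_not_covered (h : ¬ ∃ q ∈ T, ∃ k < q.1.length, j = q.2 + k) :
    replace ρ T x j = x j :=
  dif_neg h

theorem getD_eq_getD_of_overlap (hS : IsMarkerSet u S) (hρ : IsRecoding S ρ)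
    (h₁ : q₁ ∈ occurrences S x) (h₂ : q₂ ∈ occurrences S x) (hk₁ : k₁ < q₁.1.length)
    (hk₂ : k₂ < q₂.1.length) (hj : q₁.2 + k₁ = q₂.2 + k₂) (a b : A) :
    (ρ q₁.1).getD k₁ a = (ρ q₂.1).getD k₂ b := by
  rw [List.getD_eq_getElem _ _ (by rwa [hρ.length_eq _ h₁.1]),
    List.getD_eq_getElem _ _ (by rwa [hρ.length_eq _ h₂.1])]
  by_cases hq : q₁ = q₂
  · subst hq
    obtain rfl : k₁ = k₂ := by omega
    rfl
  · exact hS.getElem_eq_of_ne h₁ h₂ hq hk₁ hk₂ hj (hρ.mapsTo h₁.1) (hρ.mapsTo h₂.1)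
      (hρ.length_eq _ h₁.1) (hρ.length_eq _ h₂.1)

theorem replace_eq_getD (hS : IsMarkerSet u S) (hρ : IsRecoding S ρ) (hT : T ⊆ occurrences S x)
    (hq : q ∈ T) (hk : k < q.1.length) (hj : j = q.2 + k) :
    replace ρ T x j = (ρ q.1).getD k (x j) := by
  have hcov : ∃ q ∈ T, ∃ k < q.1.length, j = q.2 + k := ⟨q, hq, k, hk, hj⟩
  obtain ⟨hmem, k', hk', hj'⟩ := hcov.choose_spec
  rw [replace, dif_pos hcov, show (j - hcov.choose.2).toNat = k' by omega]
  exact getD_eq_getD_of_overlap hS hρ (hT hmem) (hT hq) hk' hk (by omega) _ _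

theorem occursAt_replace (hS : IsMarkerSet u S) (hρ : IsRecoding S ρ)
    (hT : T ⊆ occurrences S x) (hq : q ∈ T) : occursAt (replace ρ T x) (ρ q.1) q.2 := by
  intro k hk
  have hk' : k < q.1.length := hρ.length_eq _ (hT hq).1 ▸ hk
  rw [replace_eq_getD hS hρ hT hq hk' rfl, List.getD_eq_getElem _ _ hk, List.get_eq_getElem]

theorem occursAt_replaceAll (hS : IsMarkerSet u S) (hρ : IsRecoding S ρ)
    (hq : q ∈ occurrences S x) : occursAt (replaceAll ρ S x) (ρ q.1) q.2 :=
  occursAt_replace hS hρ subset_rfl hq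

theorem mem_occurrences_shiftMap :
    q ∈ occurrences S (shiftMap x) ↔ (q.1, q.2 + 1) ∈ occurrences S x :=
  and_congr_right' occursAt_shiftMap

theorem replaceAll_shiftMap (hS : IsMarkerSet u S) (hρ : IsRecoding S ρ) (x : ℤ → A) :
    replaceAll ρ S (shiftMap x) = shiftMap (replaceAll ρ S x) := by
  funext i
  change _ = replaceAll ρ S x (i + 1)
  by_cases hcov : ∃ q ∈ occurrences S (shiftMap x), ∃ k < q.1.length, i = q.2 + k
  · obtain ⟨q, hq, k, hk, rfl⟩ := hcov
    rw [replaceAll, replace_eq_getD hS hρ subset_rfl hq hk rfl, replaceAll,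
      replace_eq_getD hS hρ subset_rfl (mem_occurrences_shiftMap.1 hq) hk (by ring)]
    rfl
  · rw [replaceAll, replace_of_not_covered hcov, replaceAll, replace_of_not_covered]
    · rfl
    · rintro ⟨q, hq, k, hk, hj⟩
      exact hcov ⟨(q.1, q.2 - 1), mem_occurrences_shiftMap.2 (by simpa using hq), k, hk,
        by simp only; omega⟩

theorem mem_occurrences_of_eqOn {y : ℤ → A} {L : ℕ} (hL : ∀ v ∈ S, v.length ≤ L) {i : ℤ}
    (hxy : ∀ j, i - L ≤ j → j ≤ i + L → x j = y j) (hq : q ∈ occurrences S x)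
    (hk : k < q.1.length) (hi : i = q.2 + k) : q ∈ occurrences S y := by
  refine ⟨hq.1, fun k' hk' => ?_⟩
  have := hL _ hq.1
  rw [← hxy _ (by omega) (by omega)]
  exact hq.2 k' hk'

theorem replaceAll_apply_eq_of_eqOn (hS : IsMarkerSet u S) (hρ : IsRecoding S ρ) {y : ℤ → A}
    {L : ℕ} (hL : ∀ v ∈ S, v.length ≤ L) {i : ℤ}
    (hxy : ∀ j, i - L ≤ j → j ≤ i + L → x j = y j) :
    replaceAll ρ S x i = replaceAll ρ S y i := by
  by_cases hcov : ∃ q ∈ occurrences S x, ∃ k < q.1.length, i = q.2 + k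
  · obtain ⟨q, hq, k, hk, hi⟩ := hcov
    rw [replaceAll, replace_eq_getD hS hρ subset_rfl hq hk hi, replaceAll,
      replace_eq_getD hS hρ subset_rfl (mem_occurrences_of_eqOn hL hxy hq hk hi) hk hi]
    exact getD_eq_getD_of_overlap hS hρ hq hq hk hk rfl _ _
  · rw [replaceAll, replace_of_not_covered hcov, replaceAll, replace_of_not_covered]
    · exact hxy i (by omega) (by omega)
    · rintro ⟨q, hq, k, hk, hi⟩
      exact hcov ⟨q, mem_occurrences_of_eqOn hL (fun j h₁ h₂ => (hxy j h₁ h₂).symm) hq hk hi,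
        k, hk, hi⟩

theorem continuous_replaceAll [TopologicalSpace A] [DiscreteTopology A] (hS : IsMarkerSet u S)
    (hρ : IsRecoding S ρ) (hfin : S.Finite) : Continuous (replaceAll ρ S) := by
  obtain ⟨L, hL⟩ := (hfin.image List.length).bddAbove
  refine continuous_pi fun i => continuous_iff_continuousAt.2 fun x => ?_
  have hnhds : (Finset.Icc (i - L) (i + L) : Set ℤ).pi (fun j => {x j}) ∈ nhds x :=
    (isOpen_set_pi (Finset.finite_toSet _) fun _ _ => isOpen_discrete _).mem_nhds (by simp)
  refine tendsto_const_nhds.congr' ?_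
  filter_upwards [hnhds] with y hy
  refine replaceAll_apply_eq_of_eqOn hS hρ (fun v hv => hL ⟨v, hv, rfl⟩) fun j h₁ h₂ => ?_
  exact (hy j (by simp [h₁, h₂])).symm

theorem occursAt_replace_of_notMem (hS : IsMarkerSet u S) (hρ : IsRecoding S ρ)
    (hT : T ⊆ occurrences S x) (hq : q ∈ occurrences S x) (hqT : q ∉ T) :
    occursAt (replace ρ T x) q.1 q.2 := by
  intro k hk
  by_cases hcov : ∃ p ∈ T, ∃ k' < p.1.length, q.2 + k = p.2 + k'
  · obtain ⟨p, hp, k', hk', hj⟩ := hcov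
    have hlen := hρ.length_eq _ (hT hp).1
    rw [replace_eq_getD hS hρ hT hp hk' hj, List.getD_eq_getElem _ _ (by omega),
      List.get_eq_getElem]
    exact hS.getElem_eq_of_ne (hT hp) hq (fun h => hqT (h ▸ hp)) hk' hk hj.symm
      (hρ.mapsTo (hT hp).1) hq.1 hlen rfl
  · exact (replace_of_not_covered hcov).trans (hq.2 k hk)

theorem replace_insert_of_not_covered (hS : IsMarkerSet u S) (hρ : IsRecoding S ρ)
    (hT : insert q T ⊆ occurrences S x) (hj : j < q.2 ∨ q.2 + q.1.length ≤ j) :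
    replace ρ (insert q T) x j = replace ρ T x j := by
  have hT' : T ⊆ occurrences S x := (Set.subset_insert _ _).trans hT
  by_cases hcov : ∃ p ∈ T, ∃ k < p.1.length, j = p.2 + k
  · obtain ⟨p, hp, k, hk, hjp⟩ := hcov
    rw [replace_eq_getD hS hρ hT (Set.mem_insert_of_mem _ hp) hk hjp,
      replace_eq_getD hS hρ hT' hp hk hjp]
  · rw [replace_of_not_covered hcov, replace_of_not_covered]
    rintro ⟨p, hp, k, hk, hjp⟩
    rcases Set.mem_insert_iff.1 hp with rfl | hp
    · omega
    · exact hcov ⟨p, hp, k, hk, hjp⟩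

end Replace

section Invert

variable {u : List A} {S : Set (List A)} {ρ : List A → List A} {x : ℤ → A} {q : List A × ℤ}

theorem occursAt_of_mem_occurrences_replaceAll (hS : IsMarkerSet u S) (hρ : IsRecoding S ρ)
    (hq : q ∈ occurrences S (replaceAll ρ S x))
    (hnot : ∀ v ∈ S, occursAt x v q.2 → ρ v ≠ q.1) : occursAt x q.1 q.2 := by
  intro k hk
  by_cases hcov : ∃ p ∈ occurrences S x, ∃ k' < p.1.length, q.2 + k = p.2 + k'
  · obtain ⟨p, hp, k', hk', hj⟩ := hcov
    have hp' : (ρ p.1, p.2) ∈ occurrences S (replaceAll ρ S x) :=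
      ⟨hρ.mapsTo hp.1, occursAt_replaceAll hS hρ hp⟩
    have hne : (ρ p.1, p.2) ≠ q := fun h => hnot p.1 hp.1 (h ▸ hp.2) (congrArg Prod.fst h)
    have hlen := hρ.length_eq _ hp.1
    rw [hj, hp.2 k' hk']
    exact hS.getElem_eq_of_ne hp' hq hne (by simpa [hlen]) hk hj.symm hp.1 hq.1 hlen.symm rfl
  · exact (replace_of_not_covered hcov).symm.trans (hq.2 k hk)

theorem exists_occursAt_of_mem_occurrences_replaceAll (hS : IsMarkerSet u S)
    (hρ : IsRecoding S ρ) (hsurj : Set.SurjOn ρ S S)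
    (hq : q ∈ occurrences S (replaceAll ρ S x)) : ∃ v ∈ S, occursAt x v q.2 ∧ ρ v = q.1 := by
  obtain ⟨v, hv, hρv⟩ := hsurj hq.1
  by_cases hnil : q.1 = []
  · refine ⟨v, hv, fun k hk => absurd hk ?_, hρv⟩
    simp [← hρ.length_eq _ hv, hρv, hnil]
  by_contra! hnot
  have hocc := occursAt_of_mem_occurrences_replaceAll hS hρ hq hnot
  refine hnot q.1 hq.1 hocc (hS.eq_of_occursAt (hρ.mapsTo hq.1) hq.1
    (occursAt_replaceAll hS hρ ⟨hq.1, hocc⟩) hq.2 ?_ hnil)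
  rw [← List.length_pos_iff, hρ.length_eq _ hq.1]
  exact List.length_pos_iff.2 hnil

theorem replaceAll_replaceAll {ρ' : List A → List A} (hS : IsMarkerSet u S) (hρ : IsRecoding S ρ)
    (hρ' : IsRecoding S ρ') (hsurj : Set.SurjOn ρ S S) (hinv : ∀ v ∈ S, ρ' (ρ v) = v)
    (x : ℤ → A) : replaceAll ρ' S (replaceAll ρ S x) = x := by
  funext j
  by_cases hcov : ∃ q ∈ occurrences S (replaceAll ρ S x), ∃ k < q.1.length, j = q.2 + k
  · obtain ⟨q, hq, k, hk, rfl⟩ := hcov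
    obtain ⟨v, hv, hocc, hρv⟩ := exists_occursAt_of_mem_occurrences_replaceAll hS hρ hsurj hq
    have hkv : k < v.length := hρ.length_eq _ hv ▸ hρv ▸ hk
    rw [replaceAll, replace_eq_getD hS hρ' subset_rfl hq hk rfl, ← hρv, hinv v hv,
      List.getD_eq_getElem _ _ hkv, hocc k hkv, List.get_eq_getElem]
  · rw [replaceAll, replace_of_not_covered hcov, replaceAll, replace_of_not_covered]
    rintro ⟨p, hp, k, hk, hj⟩
    exact hcov ⟨(ρ p.1, p.2), ⟨hρ.mapsTo hp.1, occursAt_replaceAll hS hρ hp⟩, k,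
      hρ.length_eq _ hp.1 ▸ hk, hj⟩

end Invert

section Membership

variable [TopologicalSpace A] {X : Set (ℤ → A)} {u : List A} {S : Set (List A)}
  {ρ : List A → List A} {T : Set (List A × ℤ)} {x : ℤ → A} {q : List A × ℤ}

theorem replace_mem (hX : IsSubshift X) (hS : IsMarkerSet u S) (hρ : IsRecoding S ρ)
    (hctx : ∀ v ∈ S, contexts X v ⊆ contexts X (ρ v)) (hx : x ∈ X) (hT : T.Finite)
    (hTx : T ⊆ occurrences S x) : replace ρ T x ∈ X := by
  induction T, hT using Set.Finite.induction_on with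
  | empty =>
    convert hx using 1
    funext j
    exact replace_of_not_covered (by simp)
  | @insert q T hqT _ ih =>
    have hT : T ⊆ occurrences S x := (Set.subset_insert _ _).trans hTx
    have hq := hTx (Set.mem_insert q T)
    exact hX.mem_of_replace (ih hT) (occursAt_replace_of_notMem hS hρ hT hq hqT)
      (occursAt_replace hS hρ hTx (Set.mem_insert q T)) (hρ.length_eq _ hq.1) (hctx _ hq.1)
      fun j hj => replace_insert_of_not_covered hS hρ hTx hj

theorem replaceAll_mem (hX : IsSubshift X) (hS : IsMarkerSet u S) (hρ : IsRecoding S ρ)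
    (hctx : ∀ v ∈ S, contexts X v ⊆ contexts X (ρ v)) (hfin : S.Finite) (hx : x ∈ X) :
    replaceAll ρ S x ∈ X := by
  obtain ⟨L, hL⟩ := (hfin.image List.length).bddAbove
  refine hX.mem_of_forall_inLang_window fun a m => ?_
  set T := occurrences S x ∩ S ×ˢ Set.Icc (a - L) (a + m)
  have hwin : window (replaceAll ρ S x) a m = window (replace ρ T x) a m := by
    refine window_congr fun k hk => ?_
    by_cases hcov : ∃ q ∈ occurrences S x, ∃ k' < q.1.length, a + k = q.2 + k'
    · obtain ⟨q, hq, k', hk', hj⟩ := hcov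
      have hqT : q ∈ T := ⟨hq, hq.1, by have := hL ⟨_, hq.1, rfl⟩; simp only [Set.mem_Icc]; omega⟩
      rw [replaceAll, replace_eq_getD hS hρ subset_rfl hq hk' hj,
        replace_eq_getD hS hρ Set.inter_subset_left hqT hk' hj]
    · rw [replaceAll, replace_of_not_covered hcov, replace_of_not_covered]
      rintro ⟨q, hq, hcov'⟩
      exact hcov ⟨q, hq.1, hcov'⟩
  rw [hwin]
  exact hX.inLang_window (replace_mem hX hS hρ hctx hx
    ((hfin.prod (Set.finite_Icc _ _)).subset Set.inter_subset_right) Set.inter_subset_left) a m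

theorem isAutomorphism_replaceAll [DiscreteTopology A] (hX : IsSubshift X) (hS : IsMarkerSet u S)
    (hfin : S.Finite) (hρ : IsRecoding S ρ) (hbij : Set.BijOn ρ S S)
    (hsyn : ∀ v ∈ S, contexts X (ρ v) = contexts X v) : IsAutomorphism X (replaceAll ρ S) := by
  set σ := Function.invFunOn ρ S
  have hσ : IsRecoding S σ :=
    ⟨hbij.surjOn.mapsTo_invFunOn, hbij.surjOn.invariant_invFunOn hρ.length_eq⟩
  have hσsyn : ∀ v ∈ S, contexts X (σ v) = contexts X v := hbij.surjOn.invariant_invFunOn hsyn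
  have hσsurj : Set.SurjOn σ S S := (hbij.symm hbij.invOn_invFunOn.symm).surjOn
  exact ⟨fun x hx => replaceAll_mem hX hS hρ (fun v hv => (hsyn v hv).ge) hfin hx,
    (continuous_replaceAll hS hρ hfin).continuousOn, fun x _ => replaceAll_shiftMap hS hρ x,
    replaceAll σ S, fun x hx => replaceAll_mem hX hS hσ (fun v hv => (hσsyn v hv).ge) hfin hx,
    (continuous_replaceAll hS hσ hfin).continuousOn, fun x _ => replaceAll_shiftMap hS hσ x,
    fun x _ => replaceAll_replaceAll hS hρ hσ hbij.surjOn hbij.invOn_invFunOn.1 x,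
    fun x _ => replaceAll_replaceAll hS hσ hρ hσsurj hbij.invOn_invFunOn.2 x⟩

end Membership

end

theorem stmt3_general {A : Type*} [TopologicalSpace A] [DiscreteTopology A]
    (X : Set (ℤ → A)) (hX : IsSubshift X)
    (u : List A) (W : Finset (List A))
    (hover : ∀ w₁ ∈ W, ∀ w₂ ∈ W, ∀ v : List A,
      IsOverlap (u ++ w₁ ++ u) (u ++ w₂ ++ u) v →
      IsTrivialOverlap (u ++ w₁ ++ u) (u ++ w₂ ++ u) v ∨ v = u)
    (π : List A → List A)
    (hπ : Set.BijOn π {v | ∃ w ∈ W, v = u ++ w ++ u} {v | ∃ w ∈ W, v = u ++ w ++ u})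
    (hπlen : ∀ w ∈ W, (π (u ++ w ++ u)).length = (u ++ w ++ u).length)
    (hπsyn : ∀ w ∈ W, contexts X (π (u ++ w ++ u)) = contexts X (u ++ w ++ u)) :
    ∃ F : (ℤ → A) → (ℤ → A), IsAutomorphism X F ∧
      (∀ x ∈ X, ∀ w ∈ W, ∀ i : ℤ,
        occursAt x (u ++ w ++ u) i → occursAt (F x) (π (u ++ w ++ u)) i) ∧
      (∀ x ∈ X, ∀ j : ℤ,
        (∀ w ∈ W, ∀ i : ℤ, occursAt x (u ++ w ++ u) i →
          j < i ∨ i + ((u ++ w ++ u).length : ℤ) ≤ j) → F x j = x j) ∧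
      (∀ x ∈ X, ∀ i : ℤ,
        (∃ w ∈ W, occursAt x (u ++ w ++ u) i) ↔ (∃ w ∈ W, occursAt (F x) (u ++ w ++ u) i)) := by
  set S : Set (List A) := {v | ∃ w ∈ W, v = u ++ w ++ u}
  have hS : IsMarkerSet u S := ⟨fun v ⟨w, _, hv⟩ => ⟨w, hv⟩,
    by rintro _ ⟨w₁, hw₁, rfl⟩ _ ⟨w₂, hw₂, rfl⟩; exact hover w₁ hw₁ w₂ hw₂⟩
  have hfin : S.Finite := by
    refine (W.finite_toSet.image fun w => u ++ w ++ u).subset ?_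
    rintro _ ⟨w, hw, rfl⟩
    exact ⟨w, hw, rfl⟩
  have hρ : IsRecoding S π := ⟨hπ.mapsTo, by rintro _ ⟨w, hw, rfl⟩; exact hπlen w hw⟩
  have hsyn : ∀ v ∈ S, contexts X (π v) = contexts X v := by
    rintro _ ⟨w, hw, rfl⟩; exact hπsyn w hw
  refine ⟨replaceAll π S, isAutomorphism_replaceAll hX hS hfin hρ hπ hsyn,
    fun x _ w hw i h => occursAt_replaceAll hS hρ (q := (u ++ w ++ u, i)) ⟨⟨w, hw, rfl⟩, h⟩,
    fun x _ j hj => replace_of_not_covered ?_, fun x _ i => ⟨?_, ?_⟩⟩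
  · rintro ⟨⟨_, i⟩, ⟨⟨w, hw, rfl⟩, hocc⟩, k, hk, rfl⟩
    dsimp only at hk
    rcases hj w hw i hocc with h | h <;> omega
  · rintro ⟨w, hw, h⟩
    obtain ⟨w', hw', he⟩ := hπ.mapsTo ⟨w, hw, rfl⟩
    exact ⟨w', hw', he ▸ occursAt_replaceAll hS hρ (q := (u ++ w ++ u, i)) ⟨⟨w, hw, rfl⟩, h⟩⟩
  · rintro ⟨w, hw, h⟩
    obtain ⟨_, ⟨w₀, hw₀, rfl⟩, h₀, -⟩ := exists_occursAt_of_mem_occurrences_replaceAll hS hρ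
      hπ.surjOn (q := (u ++ w ++ u, i)) ⟨⟨w, hw, rfl⟩, h⟩
    exact ⟨w₀, hw₀, h₀⟩

/-- **marker lemma.** Given marker words `uWu ⊆ L(X)` overlapping only
trivially or in `u`, and a length- and syntactic-class-preserving permutation `π` of `uWu`,
there is a reversible CA replacing every occurrence of `w ∈ uWu` by `π(w)`; moreover the
elements of `uWu` occur in `F(x)` at exactly the same positions as in `x`. -/
theorem stmt3 {A : Type*} [TopologicalSpace A] [DiscreteTopology A]
    (X : Set (ℤ → A)) (hX : IsSubshift X)
    (u : List A) (W : Finset (List A))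
    (hWL : ∀ w ∈ W, InLang X (u ++ w ++ u))
    (hover : ∀ w₁ ∈ W, ∀ w₂ ∈ W, ∀ v : List A,
      IsOverlap (u ++ w₁ ++ u) (u ++ w₂ ++ u) v →
      IsTrivialOverlap (u ++ w₁ ++ u) (u ++ w₂ ++ u) v ∨ v = u)
    (π : List A → List A)
    (hπ : Set.BijOn π {v | ∃ w ∈ W, v = u ++ w ++ u} {v | ∃ w ∈ W, v = u ++ w ++ u})
    (hπlen : ∀ w ∈ W, (π (u ++ w ++ u)).length = (u ++ w ++ u).length)
    (hπsyn : ∀ w ∈ W, contexts X (π (u ++ w ++ u)) = contexts X (u ++ w ++ u)) :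
    ∃ F : (ℤ → A) → (ℤ → A), IsAutomorphism X F ∧
      (∀ x ∈ X, ∀ w ∈ W, ∀ i : ℤ,
        occursAt x (u ++ w ++ u) i → occursAt (F x) (π (u ++ w ++ u)) i) ∧
      (∀ x ∈ X, ∀ j : ℤ,
        (∀ w ∈ W, ∀ i : ℤ, occursAt x (u ++ w ++ u) i →
          j < i ∨ i + ((u ++ w ++ u).length : ℤ) ≤ j) → F x j = x j) ∧
      (∀ x ∈ X, ∀ i : ℤ,
        (∃ w ∈ W, occursAt x (u ++ w ++ u) i) ↔ (∃ w ∈ W, occursAt (F x) (u ++ w ++ u) i)) :=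
  stmt3_general X hX u W hover π hπ hπlen hπsyn
end

section
/- Let X ⊆ A^ℤ be a subshift, A' a primed copy of A, ψ: X → X' a conjugacy as in the priming lemma (for each position ψ either keeps the symbol or replaces a by a'), and w = w₁⋯wₙ ∈ L(X) ∩ L(X') with all wᵢ ∈ A. Suppose wᵢw'_{i+1} ∉ L(X') and w'ᵢw_{i+1} ∉ L(X') for 1 ≤ i < n. If w is future deterministic in X, then w is future deterministic in X'. -/
/-
Erasing primes sends `X'` back to `X`, so a word `wᵢ b` of `X'` yields the word `wᵢ b̄` of `X`,
where `b̄` is `b` with its prime erased. Future determinism of `w` in `X` forces `b̄ = wᵢ₊₁`, and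
`b` cannot be the primed symbol `w'ᵢ₊₁` because `wᵢ w'ᵢ₊₁ ∉ L(X')`.
-/

theorem occursAt.comp {A B : Type*} {y : ℤ → B} {u : List B} {i : ℤ} (f : B → A)
    (h : occursAt y u i) : occursAt (f ∘ y) (u.map f) i := by
  intro k hk
  simp only [Function.comp_apply, List.get_eq_getElem, List.getElem_map]
  rw [h k (by simpa using hk), List.get_eq_getElem]

theorem InLang.of_image {A B : Type*} {X : Set (ℤ → A)} {ψ : (ℤ → A) → (ℤ → B)} {f : B → A}
    (hf : ∀ x ∈ X, f ∘ ψ x = x) {u : List B} (hu : InLang (ψ '' X) u) :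
    InLang X (u.map f) := by
  obtain ⟨_, ⟨x, hx, rfl⟩, hocc⟩ := hu
  exact ⟨x, hx, hf x hx ▸ hocc.comp f⟩

/-- Transfer of future determinism along a priming conjugacy: if
`wᵢ w'_{i+1} ∉ L(X')` and `w'ᵢ w_{i+1} ∉ L(X')` for `1 ≤ i < n`, and `w` is future
deterministic in `X`, then `w` is future deterministic in `X' = ψ(X)`. -/
theorem stmt5 {A : Type*}
    (X : Set (ℤ → A))
    (ψ : (ℤ → A) → (ℤ → A ⊕ A))
    (hprime : ∀ x ∈ X, ∀ i : ℤ, ψ x i = Sum.inl (x i) ∨ ψ x i = Sum.inr (x i))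
    (w : List A)
    (hno : ∀ (i : ℕ) (hi : i + 1 < w.length),
      ¬ InLang (ψ '' X) [Sum.inl (w.get ⟨i, by omega⟩), Sum.inr (w.get ⟨i + 1, hi⟩)] ∧
      ¬ InLang (ψ '' X) [Sum.inr (w.get ⟨i, by omega⟩), Sum.inl (w.get ⟨i + 1, hi⟩)])
    (hfd : ∀ (i : ℕ) (hi : i + 1 < w.length), ∀ a : A,
      InLang X [w.get ⟨i, by omega⟩, a] → a = w.get ⟨i + 1, hi⟩) :
    ∀ (i : ℕ) (hi : i + 1 < w.length), ∀ b : A ⊕ A,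
      InLang (ψ '' X) [Sum.inl (w.get ⟨i, by omega⟩), b] → b = Sum.inl (w.get ⟨i + 1, hi⟩) := by
  intro i hi b hb
  have erase_primes : ∀ x ∈ X, Sum.elim id id ∘ ψ x = x := fun x hx => funext fun j => by
    rcases hprime x hx j with h | h <;> simp [h]
  have hnext := hfd i hi _ (by simpa using hb.of_image erase_primes)
  rcases b with a | a
  · simpa using hnext
  · simp only [Sum.elim_inr, id_eq] at hnext
    exact absurd (hnext ▸ hb) (hno i hi).1
end

section
/- Let X ⊆ A^ℤ be a subshift, w = w₁⋯wₙ ∈ L(X) a synchronizing word, and ψ: X → X' a priming conjugacy (ψ(x)[i] ∈ {x[i], x[i]'}) such that w ∈ L(X'), ψ is blocking at w (for x, y ∈ X with w occurring at position 0: equality of right tails x[0,∞] = y[0,∞] implies ψ(x)[n,∞] = ψ(y)[n,∞], and equality of left tails x[−∞,n−1] = y[−∞,n−1] implies ψ(x)[−∞,−1] = ψ(y)[−∞,−1]), and the priming of w is determined from the right (x[0,∞] = y[0,∞] implies ψ(x)[0,n−1] = ψ(y)[0,n−1]) or from the left. Then w is a synchronizing word for X' = ψ(X). -/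
/-- The gluing of `x` and `y` at the origin. -/
def glue {A : Type*} (x y : ℤ → A) : ℤ → A := fun i => if i < 0 then x i else y i

/-!
Write `x' = ψ x` and `y' = ψ y`. Since `ψ` only primes letters, `x` and `y` carry `w` at the
origin, so `z = x ⋈ y` lies in `X` because `w` is synchronizing. Now `z` agrees with `x` left of
`n = |w|` and with `y` from `0` on, so blocking gives `ψ z = ψ x` on the negative coordinates and
`ψ z = ψ y` from `n` on. On the window `[0, n)` determination from the right (resp. left) gives
`ψ z = ψ y` (resp. `ψ z = ψ x`), and there `ψ x` and `ψ y` both read the unprimed copy of `w`.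
Hence `x' ⋈ y' = ψ z ∈ ψ(X)`.
-/

section Words

variable {α : Type*} {w : List α}

theorem occursAt_of_occursAt_map_inl {x : ℤ → α} {x' : ℤ → α ⊕ α} {j : ℤ}
    (hx' : ∀ i, x' i = Sum.inl (x i) ∨ x' i = Sum.inr (x i))
    (hw : occursAt x' (w.map Sum.inl) j) : occursAt x w j := by
  intro k hk
  have hk' := hw k (by simpa using hk)
  simp only [List.get_eq_getElem, List.getElem_map] at hk'
  rcases hx' (j + k) with h | h <;> rw [h] at hk'
  · exact Sum.inl.inj hk'
  · exact absurd hk' Sum.inr_ne_inl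

theorem eq_of_occursAt_zero {x y : ℤ → α} (hx : occursAt x w 0) (hy : occursAt y w 0)
    {i : ℤ} (hi₀ : 0 ≤ i) (hin : i < w.length) : x i = y i := by
  lift i to ℕ using hi₀
  have hk : i < w.length := by exact_mod_cast hin
  simpa using (hx i hk).trans (hy i hk).symm

end Words

section Glue

variable {α : Type*} {x y : ℤ → α} {i : ℤ}

theorem glue_of_neg (hi : i < 0) : glue x y i = x i := if_pos hi

theorem glue_of_nonneg (hi : 0 ≤ i) : glue x y i = y i := if_neg (not_lt.mpr hi)

theorem eq_glue_of_eqOn {z : ℤ → α} (hneg : ∀ i < 0, z i = x i)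
    (hnonneg : ∀ i, 0 ≤ i → z i = y i) : z = glue x y := by
  funext i
  rcases lt_or_ge i 0 with hi | hi
  · rw [glue_of_neg hi, hneg i hi]
  · rw [glue_of_nonneg hi, hnonneg i hi]

theorem occursAt_glue {w : List α} (hy : occursAt y w 0) : occursAt (glue x y) w 0 := by
  intro k hk
  rw [glue_of_nonneg (by positivity)]
  exact hy k hk

theorem glue_eq_left_of_lt_length {w : List α} (hx : occursAt x w 0) (hy : occursAt y w 0)
    (hi : i < w.length) : glue x y i = x i := by
  rcases lt_or_ge i 0 with hi₀ | hi₀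
  · exact glue_of_neg hi₀
  · rw [glue_of_nonneg hi₀]
    exact eq_of_occursAt_zero hy hx hi₀ hi

end Glue

theorem stmt6_general {A : Type*}
    (X : Set (ℤ → A))
    (ψ : (ℤ → A) → (ℤ → A ⊕ A))
    (hprime : ∀ x ∈ X, ∀ i : ℤ, ψ x i = Sum.inl (x i) ∨ ψ x i = Sum.inr (x i))
    (w : List A)
    (hsyncX : InLang X w ∧ ∀ x ∈ X, ∀ y ∈ X,
      occursAt x w 0 → occursAt y w 0 → glue x y ∈ X)
    (hblock : ∀ x ∈ X, ∀ y ∈ X, occursAt x w 0 → occursAt y w 0 →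
      ((∀ i : ℤ, 0 ≤ i → x i = y i) →
        ∀ i : ℤ, (w.length : ℤ) ≤ i → ψ x i = ψ y i) ∧
      ((∀ i : ℤ, i < (w.length : ℤ) → x i = y i) →
        ∀ i : ℤ, i < 0 → ψ x i = ψ y i))
    (hdet :
      (∀ x ∈ X, ∀ y ∈ X, occursAt x w 0 → occursAt y w 0 →
        (∀ i : ℤ, 0 ≤ i → x i = y i) →
        ∀ i : ℤ, 0 ≤ i → i < (w.length : ℤ) → ψ x i = ψ y i) ∨
      (∀ x ∈ X, ∀ y ∈ X, occursAt x w 0 → occursAt y w 0 →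
        (∀ i : ℤ, i < (w.length : ℤ) → x i = y i) →
        ∀ i : ℤ, 0 ≤ i → i < (w.length : ℤ) → ψ x i = ψ y i)) :
    ∀ x' ∈ ψ '' X, ∀ y' ∈ ψ '' X,
      occursAt x' (w.map Sum.inl) 0 → occursAt y' (w.map Sum.inl) 0 →
      glue x' y' ∈ ψ '' X := by
  rintro _ ⟨x, hxX, rfl⟩ _ ⟨y, hyX, rfl⟩ hx' hy'
  have hx := occursAt_of_occursAt_map_inl (hprime x hxX) hx'
  have hy := occursAt_of_occursAt_map_inl (hprime y hyX) hy'
  have hzX := hsyncX.2 x hxX y hyX hx hy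
  have hz : occursAt (glue x y) w 0 := occursAt_glue hy
  have hzx : ∀ i : ℤ, i < w.length → glue x y i = x i := fun i hi ↦
    glue_eq_left_of_lt_length hx hy hi
  have hzy : ∀ i : ℤ, 0 ≤ i → glue x y i = y i := fun i hi ↦ glue_of_nonneg hi
  have hwindow : ∀ i : ℤ, 0 ≤ i → i < w.length → ψ (glue x y) i = ψ y i := by
    rcases hdet with hright | hleft
    · exact hright _ hzX y hyX hz hy hzy
    · intro i hi₀ hin
      rw [hleft _ hzX x hxX hz hx hzx i hi₀ hin]
      exact eq_of_occursAt_zero hx' hy' hi₀ (by simpa using hin)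
  refine ⟨glue x y, hzX, eq_glue_of_eqOn ?_ fun i hi₀ ↦ ?_⟩
  · exact fun i hi ↦ ((hblock x hxX _ hzX hx hz).2 (fun j hj ↦ (hzx j hj).symm) i hi).symm
  · rcases lt_or_ge i w.length with hin | hin
    · exact hwindow i hi₀ hin
    · exact ((hblock y hyX _ hzX hy hz).1 (fun j hj ↦ (hzy j hj).symm) i hin).symm

/-- If `w` is a synchronizing word of `X` and the priming conjugacy `ψ`
is blocking at `w`, with the priming of `w` determined from the right or from the left,
then `w` (primed via `Sum.inl`) is a synchronizing word of `X' = ψ(X)`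
(in the configuration/gluing formulation). -/
theorem stmt6 {A : Type*} [TopologicalSpace A] [DiscreteTopology A]
    (X : Set (ℤ → A)) (hX : IsSubshift X)
    (ψ : (ℤ → A) → (ℤ → A ⊕ A))
    (hcont : ContinuousOn ψ X)
    (hcomm : ∀ x ∈ X, ψ (shiftMap x) = shiftMap (ψ x))
    (hinj : Set.InjOn ψ X)
    (hprime : ∀ x ∈ X, ∀ i : ℤ, ψ x i = Sum.inl (x i) ∨ ψ x i = Sum.inr (x i))
    (w : List A)
    (hsyncX : InLang X w ∧ ∀ x ∈ X, ∀ y ∈ X,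
      occursAt x w 0 → occursAt y w 0 → glue x y ∈ X)
    (hwX' : InLang (ψ '' X) (w.map Sum.inl))
    (hblock : ∀ x ∈ X, ∀ y ∈ X, occursAt x w 0 → occursAt y w 0 →
      ((∀ i : ℤ, 0 ≤ i → x i = y i) →
        ∀ i : ℤ, (w.length : ℤ) ≤ i → ψ x i = ψ y i) ∧
      ((∀ i : ℤ, i < (w.length : ℤ) → x i = y i) →
        ∀ i : ℤ, i < 0 → ψ x i = ψ y i))
    (hdet :
      (∀ x ∈ X, ∀ y ∈ X, occursAt x w 0 → occursAt y w 0 →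
        (∀ i : ℤ, 0 ≤ i → x i = y i) →
        ∀ i : ℤ, 0 ≤ i → i < (w.length : ℤ) → ψ x i = ψ y i) ∨
      (∀ x ∈ X, ∀ y ∈ X, occursAt x w 0 → occursAt y w 0 →
        (∀ i : ℤ, i < (w.length : ℤ) → x i = y i) →
        ∀ i : ℤ, 0 ≤ i → i < (w.length : ℤ) → ψ x i = ψ y i)) :
    ∀ x' ∈ ψ '' X, ∀ y' ∈ ψ '' X,
      occursAt x' (w.map Sum.inl) 0 → occursAt y' (w.map Sum.inl) 0 →
      glue x' y' ∈ ψ '' X :=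
  stmt6_general X ψ hprime w hsyncX hblock hdet
end

section
/- Let S ⊆ ℕ be nonempty and let X_S be the S-gap shift. If S is infinite and not eventually periodic (so X_S is not sofic), then every automorphism F ∈ Aut(X_S) fixes the point 1^ℤ: F(1^ℤ) = 1^ℤ. -/
/-- The generating word `0 1^n` of an `S`-gap shift. -/
def genWord (n : ℕ) : List Bool := false :: List.replicate n true

/-- `w` is a concatenation of generating words `0 1^n`, `n ∈ S`. -/
def InGenStar (S : Set ℕ) (w : List Bool) : Prop :=
  ∃ l : List ℕ, (∀ n ∈ l, n ∈ S) ∧ w = (l.map genWord).flatten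

/-- The subword `x[i, i+n-1]` of a configuration. -/
def wordAt {A : Type*} (x : ℤ → A) (i : ℤ) (n : ℕ) : List A :=
  (List.range n).map fun k => x (i + k)

/-- The `S`-gap shift: configurations all of whose finite subwords occur in some
concatenation of the generating words. -/
def SGap (S : Set ℕ) : Set (ℤ → Bool) :=
  {x | ∀ (i : ℤ) (n : ℕ), ∃ w : List Bool, InGenStar S w ∧ (wordAt x i n) <:+: w}

/-- The characteristic sequence of `S` is eventually periodic. -/
def EventuallyPeriodic (S : Set ℕ) : Prop :=
  ∃ p > 0, ∃ N : ℕ, ∀ n ≥ N, (n ∈ S ↔ n + p ∈ S)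

/-- `X_{S,ℓ}`: points whose right tail from `0` is `01^∞`. -/
def SGapLeft (S : Set ℕ) : Set (ℤ → Bool) :=
  {x | x ∈ SGap S ∧ x 0 = false ∧ ∀ i : ℤ, 0 < i → x i = true}

/-- `X_{S,→}`: points whose left tail up to `0` is `^∞10`. -/
def SGapRight (S : Set ℕ) : Set (ℤ → Bool) :=
  {x | x ∈ SGap S ∧ x 0 = false ∧ ∀ i : ℤ, i < 0 → x i = true}

open Topology

section Words

variable {A : Type*}

-- In `wordAt`, `List.range n` is coerced to a `List ℤ` through the list monad.
lemma wordAt_eq_map_range (x : ℤ → A) (i : ℤ) (n : ℕ) :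
    wordAt x i n = (List.range n).map fun k : ℕ => x (i + k) := by
  simp [wordAt, ← List.map_eq_flatMap]

lemma wordAt_add (x : ℤ → A) (i : ℤ) (p q : ℕ) :
    wordAt x i (p + q) = wordAt x i p ++ wordAt x (i + p) q := by
  simp only [wordAt_eq_map_range, List.range_add, List.map_append, List.map_map]
  congr 1
  refine List.map_congr_left fun k _ => ?_
  simp only [Function.comp_apply]
  push_cast
  ring_nf

lemma wordAt_one (x : ℤ → A) (i : ℤ) : wordAt x i 1 = [x i] := by
  simp [wordAt_eq_map_range]

lemma wordAt_congr {x y : ℤ → A} {i : ℤ} {n : ℕ} (h : ∀ k : ℕ, k < n → x (i + k) = y (i + k)) :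
    wordAt x i n = wordAt y i n := by
  simp only [wordAt_eq_map_range]
  exact List.map_congr_left fun k hk => h k (List.mem_range.1 hk)

lemma wordAt_eq_replicate {x : ℤ → A} {i : ℤ} {n : ℕ} {b : A}
    (h : ∀ j : ℤ, i ≤ j → j < i + n → x j = b) : wordAt x i n = List.replicate n b := by
  rw [wordAt_eq_map_range]
  refine List.eq_replicate_iff.2 ⟨by simp, fun c hc => ?_⟩
  obtain ⟨k, hk, rfl⟩ := List.mem_map.1 hc
  exact h _ (by omega) (by rw [List.mem_range] at hk; omega)

lemma wordAt_infix_wordAt (x : ℤ → A) {a b : ℤ} {m M : ℕ} (hba : b ≤ a) (hM : a + m ≤ b + M) :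
    wordAt x a m <:+: wordAt x b M := by
  obtain ⟨p, hp⟩ : ∃ p : ℕ, a = b + p := ⟨(a - b).toNat, by omega⟩
  obtain ⟨q, rfl⟩ : ∃ q : ℕ, M = p + (m + q) := ⟨M - p - m, by omega⟩
  exact ⟨wordAt x b p, wordAt x (a + m) q, by rw [wordAt_add, wordAt_add, hp, List.append_assoc]⟩

lemma wordAt_shiftPow (x : ℤ → A) (k i : ℤ) (n : ℕ) :
    wordAt (shiftPow k x) i n = wordAt x (i + k) n := by
  simp only [wordAt_eq_map_range]
  exact List.map_congr_left fun j _ => by simp only [shiftPow]; ring_nf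

end Words

section Shift

variable {A : Type*}

lemma shiftPow_zero (x : ℤ → A) : shiftPow 0 x = x := by
  funext i; simp [shiftPow]

lemma shiftPow_shiftPow (a b : ℤ) (x : ℤ → A) :
    shiftPow a (shiftPow b x) = shiftPow (a + b) x := by
  funext i; simp only [shiftPow]; ring_nf

lemma shiftPow_add_one (k : ℤ) (x : ℤ → A) : shiftPow (k + 1) x = shiftMap (shiftPow k x) := by
  funext i; simp only [shiftPow, shiftMap]; ring_nf

lemma eq_const_of_shiftMap_eq {y : ℤ → A} (h : shiftMap y = y) : y = fun _ => y 0 := by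
  have hstep (i : ℤ) : y (i + 1) = y i := congrFun h i
  funext i
  induction i using Int.induction_on with
  | zero => rfl
  | succ i ih => rw [hstep, ih]
  | pred i ih => rw [← ih, ← hstep]; ring_nf

variable {X : Set (ℤ → A)} {F : (ℤ → A) → (ℤ → A)}

lemma map_shiftPow (hX : ∀ k, ∀ x ∈ X, shiftPow k x ∈ X)
    (hF : ∀ x ∈ X, F (shiftMap x) = shiftMap (F x)) (k : ℤ) {x : ℤ → A} (hx : x ∈ X) :
    F (shiftPow k x) = shiftPow k (F x) := by
  have hnat (n : ℕ) : ∀ x ∈ X, F (shiftPow n x) = shiftPow n (F x) := by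
    induction n with
    | zero => simp [shiftPow_zero]
    | succ n ih =>
      intro x hx
      push_cast
      rw [shiftPow_add_one, hF _ (hX _ _ hx), ih x hx, shiftPow_add_one]
  obtain ⟨n, rfl | rfl⟩ := Int.eq_nat_or_neg k
  · exact hnat n x hx
  · have hinv : x = shiftPow n (shiftPow (-n) x) := by
      rw [shiftPow_shiftPow, add_neg_cancel, shiftPow_zero]
    conv_rhs => rw [hinv, hnat n _ (hX _ _ hx), shiftPow_shiftPow, neg_add_cancel, shiftPow_zero]

lemma exists_eq_const_of_commute_shiftMap (hF : ∀ x ∈ X, F (shiftMap x) = shiftMap (F x))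
    {a : A} (ha : (fun _ => a) ∈ X) : ∃ b : A, F (fun _ => a) = fun _ => b :=
  ⟨_, eq_const_of_shiftMap_eq (hF _ ha).symm⟩

end Shift

def DependsOnWindow {A : Type*} (X : Set (ℤ → A)) (F : (ℤ → A) → (ℤ → A)) (r : ℕ) : Prop :=
  ∀ x ∈ X, ∀ y ∈ X, ∀ i k : ℤ, (∀ j : ℤ, |j| ≤ r → x (i + j) = y (k + j)) → F x i = F y k

section Topology

variable {A : Type*} [TopologicalSpace A] [DiscreteTopology A]

lemma nhds_hasBasis_window (x : ℤ → A) :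
    (𝓝 x).HasBasis (fun _ : ℕ => True) fun R => {y | ∀ j : ℤ, |j| ≤ R → y j = x j} := by
  refine ⟨fun s => ⟨fun hs => ?_, fun ⟨R, _, hR⟩ => Filter.mem_of_superset ?_ hR⟩⟩
  · obtain ⟨I, t, ht, hIt⟩ := Filter.mem_pi'.1 (nhds_pi (a := x) ▸ hs)
    refine ⟨I.sup Int.natAbs, trivial, fun y hy => hIt fun j hj => ?_⟩
    have hjR : (j.natAbs : ℤ) ≤ (I.sup Int.natAbs : ℕ) := by exact_mod_cast Finset.le_sup hj
    rw [hy j (by rwa [Int.abs_eq_natAbs])]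
    exact mem_of_mem_nhds (ht j)
  · have hpi : {y | ∀ j : ℤ, |j| ≤ R → y j = x j} = (Set.Icc (-(R : ℤ)) R).pi fun j => {x j} := by
      ext y; simp [abs_le]
    rw [hpi]
    exact (isOpen_set_pi (Set.finite_Icc _ _) fun _ _ => isOpen_discrete _).mem_nhds (by simp)

lemma exists_window_of_continuousOn {B : Type*} [TopologicalSpace B] [DiscreteTopology B]
    {X : Set (ℤ → A)} (hX : IsCompact X) {f : (ℤ → A) → B} (hf : ContinuousOn f X) :
    ∃ r : ℕ, ∀ x ∈ X, ∀ y ∈ X, (∀ j : ℤ, |j| ≤ r → x j = y j) → f x = f y := by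
  have hlocal : ∀ x ∈ X, ∃ m : ℕ, ∀ y ∈ X, (∀ j : ℤ, |j| ≤ m → y j = x j) → f y = f x := by
    intro x hx
    obtain ⟨m, -, hm⟩ := ((nhdsWithin_hasBasis (nhds_hasBasis_window x) X).mem_iff).1
      (hf x hx ((isOpen_discrete {f x}).mem_nhds rfl))
    exact ⟨m, fun y hy hyx => hm ⟨hyx, hy⟩⟩
  choose! m hm using hlocal
  obtain ⟨t, htX, hcover⟩ := hX.elim_nhds_subcover _
    fun x _ => (nhds_hasBasis_window x).mem_of_mem (i := m x) trivial
  refine ⟨t.sup m, fun x hx y hy hxy => ?_⟩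
  obtain ⟨z, hz, hxz⟩ := Set.mem_iUnion₂.1 (hcover hx)
  have hmz : (m z : ℤ) ≤ (t.sup m : ℕ) := by exact_mod_cast Finset.le_sup hz
  rw [hm z (htX z hz) x hx hxz,
    hm z (htX z hz) y hy fun j hj => (hxy j (hj.trans hmz)).symm.trans (hxz j hj)]

-- The Curtis–Hedlund–Lyndon theorem.
lemma exists_dependsOnWindow_of_continuousOn {X : Set (ℤ → A)} (hX : IsCompact X)
    (hXshift : ∀ k, ∀ x ∈ X, shiftPow k x ∈ X) {F : (ℤ → A) → (ℤ → A)} (hFc : ContinuousOn F X)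
    (hF : ∀ x ∈ X, F (shiftMap x) = shiftMap (F x)) :
    ∃ r : ℕ, DependsOnWindow X F r := by
  obtain ⟨r, hr⟩ := exists_window_of_continuousOn hX ((continuous_apply 0).comp_continuousOn hFc)
  have heval {x : ℤ → A} (hx : x ∈ X) (i : ℤ) : F x i = F (shiftPow i x) 0 := by
    rw [map_shiftPow hXshift hF i hx]; simp [shiftPow]
  refine ⟨r, fun x hx y hy i k hxy => ?_⟩
  rw [heval hx, heval hy]
  exact hr _ (hXshift i x hx) _ (hXshift k y hy) fun j hj => by
    simpa only [shiftPow, add_comm j] using hxy j hj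

lemma isLocallyConstant_wordAt (i : ℤ) (n : ℕ) :
    IsLocallyConstant fun x : ℤ → A => wordAt x i n := by
  refine (IsLocallyConstant.iff_eventually_eq _).2 fun x => ?_
  filter_upwards [(nhds_hasBasis_window x).mem_of_mem (i := i.natAbs + n) trivial] with y hy
  exact wordAt_congr fun k hk => hy _ (abs_le.2 ⟨by omega, by omega⟩)

end Topology

section GenWords

lemma head?_flatten_map_genWord_ne (l : List ℕ) : (l.map genWord).flatten.head? ≠ some true := by
  cases l <;> simp [genWord]

lemma eq_of_replicate_true_append_false_eq {g n : ℕ} {t r : List Bool} (hr : r.head? ≠ some true)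
    (h : List.replicate g true ++ false :: t = List.replicate n true ++ r) : g = n := by
  induction g generalizing n with
  | zero => cases n <;> simp_all [List.replicate_succ]
  | succ g ih =>
    cases n with
    | zero => subst h; simp [List.replicate_succ] at hr
    | succ n =>
      simp only [List.replicate_succ, List.cons_append, List.cons.injEq] at h
      simp [ih h.2]

lemma exists_append_eq_of_append_false_eq_replicate_true_append {n : ℕ} {s u r : List Bool}
    (h : s ++ false :: u = List.replicate n true ++ r) : ∃ s', s' ++ false :: u = r := by
  induction n generalizing s with
  | zero => exact ⟨s, h⟩
  | succ n ih =>
    cases s with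
    | nil => simp [List.replicate_succ] at h
    | cons c s =>
      simp only [List.replicate_succ, List.cons_append, List.cons.injEq] at h
      exact ih h.2

lemma mem_of_gap_infix_flatten_map_genWord {g : ℕ} (l : List ℕ) {s t : List Bool}
    (h : s ++ false :: (List.replicate g true ++ false :: t) = (l.map genWord).flatten) :
    g ∈ l := by
  induction l generalizing s with
  | nil => simp at h
  | cons n l ih =>
    simp only [List.map_cons, List.flatten_cons, genWord, List.cons_append] at h
    cases s with
    | nil =>
      simp only [List.nil_append, List.cons.injEq, true_and] at h
      simp [eq_of_replicate_true_append_false_eq (head?_flatten_map_genWord_ne l) h]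
    | cons c s =>
      simp only [List.cons_append, List.cons.injEq] at h
      obtain ⟨s', hs'⟩ := exists_append_eq_of_append_false_eq_replicate_true_append h.2
      exact List.mem_cons_of_mem _ (ih hs')

variable {S : Set ℕ}

lemma mem_of_gap_infix {w : List Bool} (hw : InGenStar S w) {g : ℕ}
    (h : false :: (List.replicate g true ++ [false]) <:+: w) : g ∈ S := by
  obtain ⟨l, hl, rfl⟩ := hw
  obtain ⟨s, t, hst⟩ := h
  exact hl g (mem_of_gap_infix_flatten_map_genWord l (by simpa using hst))

lemma replicate_append_replicate_infix {α : Type*} (a : α) (u : List α) {N m : ℕ}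
    (hNm : N ≤ m) :
    List.replicate N a ++ u ++ List.replicate N a <:+:
      List.replicate m a ++ u ++ List.replicate m a := by
  obtain ⟨d, rfl⟩ := Nat.exists_eq_add_of_le' hNm
  refine ⟨List.replicate d a, List.replicate d a, ?_⟩
  nth_rw 2 [add_comm]
  simp only [List.replicate_add, List.append_assoc]

lemma exists_genStar_replicate_true_infix (hinf : S.Infinite) (N : ℕ) :
    ∃ w, InGenStar S w ∧ List.replicate N true <:+: w := by
  obtain ⟨m, hm, hNm⟩ := hinf.exists_gt N
  obtain ⟨d, rfl⟩ := Nat.exists_eq_add_of_le hNm.le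
  exact ⟨genWord (N + d), ⟨[N + d], by simpa using hm, by simp⟩, [false], List.replicate d true,
    by rw [genWord, List.replicate_add]; rfl⟩

lemma exists_genStar_gap_infix (hinf : S.Infinite) (h0 : 0 ∈ S) {n : ℕ} (hn : 0 < n) (N : ℕ) :
    ∃ w, InGenStar S w ∧
      List.replicate N true ++ List.replicate n false ++ List.replicate N true <:+: w := by
  obtain ⟨m, hm, hNm⟩ := hinf.exists_gt N
  obtain ⟨k, rfl⟩ := Nat.exists_eq_add_of_lt hn
  have hl : ∀ j ∈ m :: (List.replicate k 0 ++ [m]), j ∈ S := by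
    simp only [List.mem_cons, List.mem_append, List.mem_replicate, List.not_mem_nil, or_false]
    rintro j (rfl | ⟨-, rfl⟩ | rfl) <;> assumption
  exact ⟨_, ⟨_, hl, rfl⟩, (replicate_append_replicate_infix true _ hNm.le).trans
    ⟨[false], [], by simp [genWord, List.replicate_succ']⟩⟩

end GenWords

section SGap

variable {S : Set ℕ}

lemma shiftPow_mem_SGap (k : ℤ) {x : ℤ → Bool} (hx : x ∈ SGap S) : shiftPow k x ∈ SGap S :=
  fun i n => by
    obtain ⟨w, hw, hxw⟩ := hx (i + k) n
    exact ⟨w, hw, wordAt_shiftPow x k i n ▸ hxw⟩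

lemma isClosed_SGap (S : Set ℕ) : IsClosed (SGap S) := by
  have hSGap : SGap S = ⋂ (i : ℤ) (n : ℕ),
      (fun x => wordAt x i n) ⁻¹' {u | ∃ w, InGenStar S w ∧ u <:+: w} := by
    ext x; simp [SGap]
  rw [hSGap]
  exact isClosed_iInter fun i => isClosed_iInter fun n =>
    ⟨isLocallyConstant_wordAt i n {u | ∃ w, InGenStar S w ∧ u <:+: w}ᶜ⟩

lemma mem_SGap_of_forall_window {x : ℤ → Bool} (c : ℕ)
    (h : ∀ N : ℕ, ∃ w, InGenStar S w ∧ wordAt x (-N) (N + c + N) <:+: w) : x ∈ SGap S := by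
  intro i n
  obtain ⟨w, hw, hxw⟩ := h (i.natAbs + n)
  exact ⟨w, hw, (wordAt_infix_wordAt x (by omega) (by omega)).trans hxw⟩

lemma const_true_mem_SGap (hinf : S.Infinite) : (fun _ => true) ∈ SGap S :=
  mem_SGap_of_forall_window 0 fun N => by
    rw [wordAt_eq_replicate fun _ _ _ => rfl]
    exact exists_genStar_replicate_true_infix hinf _

def gapPoint (n : ℕ) : ℤ → Bool := fun i => !decide (0 ≤ i ∧ i < n)

lemma gapPoint_eq_true_iff {n : ℕ} {i : ℤ} : gapPoint n i = true ↔ i < 0 ∨ n ≤ i := by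
  simp [gapPoint]

lemma gapPoint_eq_false_iff {n : ℕ} {i : ℤ} : gapPoint n i = false ↔ 0 ≤ i ∧ i < n := by
  simp [gapPoint]

lemma wordAt_gapPoint (n N : ℕ) :
    wordAt (gapPoint n) (-N) (N + n + N) =
      List.replicate N true ++ List.replicate n false ++ List.replicate N true := by
  rw [wordAt_add, wordAt_add, wordAt_eq_replicate, wordAt_eq_replicate, wordAt_eq_replicate] <;>
    intro j hj₁ hj₂ <;> simp only [gapPoint_eq_true_iff, gapPoint_eq_false_iff] <;> omega

lemma gapPoint_mem_SGap (hinf : S.Infinite) (h0 : 0 ∈ S) {n : ℕ} (hn : 0 < n) :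
    gapPoint n ∈ SGap S :=
  mem_SGap_of_forall_window n fun N => by
    rw [wordAt_gapPoint]
    exact exists_genStar_gap_infix hinf h0 hn N

def HasGapAt (x : ℤ → Bool) (p : ℤ) (g : ℕ) : Prop :=
  x p = false ∧ x (p + g + 1) = false ∧ ∀ i, p < i → i ≤ p + g → x i = true

lemma mem_of_hasGapAt {x : ℤ → Bool} (hx : x ∈ SGap S) {p : ℤ} {g : ℕ} (h : HasGapAt x p g) :
    g ∈ S := by
  obtain ⟨hp, hq, hmid⟩ := h
  obtain ⟨w, hw, hxw⟩ := hx p (1 + g + 1)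
  have hend : p + ((1 + g : ℕ) : ℤ) = p + g + 1 := by push_cast; ring
  rw [wordAt_add, wordAt_add, wordAt_one, wordAt_one, hp, hend, hq,
    wordAt_eq_replicate fun i h₁ h₂ => hmid i (by omega) (by omega)] at hxw
  exact mem_of_gap_infix hw (by simpa using hxw)

lemma exists_hasGapAt {x : ℤ → Bool} {a b c : ℤ} (hac : a < c) (hcb : c < b) (ha : x a = false)
    (hc : x c = true) (hb : x b = false) :
    ∃ (p : ℤ) (g : ℕ), p < c ∧ c < p + g + 1 ∧ HasGapAt x p g := by
  obtain ⟨p, ⟨hpc, hp⟩, hpmax⟩ := Int.exists_greatest_of_bdd (P := fun i => i < c ∧ x i = false)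
    ⟨c, fun i h => h.1.le⟩ ⟨a, hac, ha⟩
  obtain ⟨q, ⟨hcq, hq⟩, hqmin⟩ := Int.exists_least_of_bdd (P := fun i => c < i ∧ x i = false)
    ⟨c, fun i h => h.1.le⟩ ⟨b, hcb, hb⟩
  obtain ⟨g, rfl⟩ : ∃ g : ℕ, q = p + g + 1 := ⟨(q - p - 1).toNat, by omega⟩
  refine ⟨p, g, hpc, hcq, hp, hq, fun i hpi hiq => ?_⟩
  rcases lt_trichotomy i c with hic | rfl | hci
  · by_contra hne
    have := hpmax i ⟨hic, by simpa using hne⟩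
    omega
  · exact hc
  · by_contra hne
    have := hqmin i ⟨hci, by simpa using hne⟩
    omega

end SGap

lemma eventuallyPeriodic_of_forall_add_mem {S : Set ℕ} {g : ℕ} (h : ∀ k, g + k ∈ S) :
    EventuallyPeriodic S := by
  refine ⟨1, one_pos, g, fun n hn => ?_⟩
  obtain ⟨k, rfl⟩ := Nat.exists_eq_add_of_le hn
  exact iff_of_true (h k) (h (k + 1))

section Swap

variable {S : Set ℕ} {F : (ℤ → Bool) → (ℤ → Bool)} {r : ℕ}

lemma apply_gapPoint_add_eq_of_lt (hF : DependsOnWindow (SGap S) F r) (hinf : S.Infinite)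
    (h0 : 0 ∈ S) {N : ℕ} (hN : 0 < N) (k : ℕ) {i : ℤ} (hi : i + r < N) :
    F (gapPoint (N + k)) i = F (gapPoint N) i :=
  hF _ (gapPoint_mem_SGap hinf h0 (by omega)) _ (gapPoint_mem_SGap hinf h0 hN) i i fun j hj => by
    have := abs_le.1 hj
    rw [Bool.eq_iff_iff, gapPoint_eq_true_iff, gapPoint_eq_true_iff]
    omega

lemma apply_gapPoint_add_add_eq_of_le (hF : DependsOnWindow (SGap S) F r) (hinf : S.Infinite)
    (h0 : 0 ∈ S) {N : ℕ} (hN : 0 < N) (k : ℕ) {i : ℤ} (hi : r ≤ i) :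
    F (gapPoint (N + k)) (i + k) = F (gapPoint N) i :=
  hF _ (gapPoint_mem_SGap hinf h0 (by omega)) _ (gapPoint_mem_SGap hinf h0 hN) _ i fun j hj => by
    have := abs_le.1 hj
    rw [Bool.eq_iff_iff, gapPoint_eq_true_iff, gapPoint_eq_true_iff]
    omega

theorem exists_forall_add_mem_of_swap (hF : DependsOnWindow (SGap S) F r)
    (hmaps : Set.MapsTo F (SGap S) (SGap S)) (hinf : S.Infinite)
    (h0X : (fun _ => false) ∈ SGap S) (h10 : F (fun _ => true) = fun _ => false)
    (h01 : F (fun _ => false) = fun _ => true) : ∃ g, ∀ k, g + k ∈ S := by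
  have h0 : 0 ∈ S := mem_of_hasGapAt (p := 0) h0X ⟨rfl, rfl, fun i h₁ h₂ => by omega⟩
  have h1X := const_true_mem_SGap hinf
  set N := 2 * r + 1
  have hN : 0 < N := by omega
  have hwindow {n : ℕ} (hn : 0 < n) {b : Bool} (hb : (fun _ => b) ∈ SGap S) {i : ℤ}
      (hi : ∀ j : ℤ, |j| ≤ r → gapPoint n (i + j) = b) : F (gapPoint n) i = !b := by
    rw [hF _ (gapPoint_mem_SGap hinf h0 hn) _ hb i 0 hi]
    cases b <;> simp [h10, h01]
  -- With `N = 2r + 1` the window around `r` lies in the `0`-block of `gapPoint N`, while those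
  -- around `-r - 1` and `N + r` lie in its `1`-blocks.
  obtain ⟨p, g, hpr, hrg, hgap⟩ := exists_hasGapAt (x := F (gapPoint N)) (a := -r - 1) (c := r)
    (b := N + r) (by omega) (by omega)
    (hwindow hN h1X fun j hj => gapPoint_eq_true_iff.2 (by have := abs_le.1 hj; omega))
    (hwindow hN h0X fun j hj => gapPoint_eq_false_iff.2 (by have := abs_le.1 hj; omega))
    (hwindow hN h1X fun j hj => gapPoint_eq_true_iff.2 (by have := abs_le.1 hj; omega))
  refine ⟨g, fun k => mem_of_hasGapAt (hmaps (gapPoint_mem_SGap hinf h0 (by omega : 0 < N + k)))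
    (p := p) ⟨?_, ?_, fun i hpi hi => ?_⟩⟩
  · rw [apply_gapPoint_add_eq_of_lt hF hinf h0 hN k (by omega)]
    exact hgap.1
  · rw [show p + ((g + k : ℕ) : ℤ) + 1 = p + g + 1 + k by push_cast; ring,
      apply_gapPoint_add_add_eq_of_le hF hinf h0 hN k (by omega)]
    exact hgap.2.1
  · rcases le_or_gt i r with hir | hri
    · rw [apply_gapPoint_add_eq_of_lt hF hinf h0 hN k (by omega)]
      exact hgap.2.2 i hpi (by omega)
    rcases lt_or_ge (i + r) (N + k) with hiN | hiN
    · exact hwindow (by omega) h0X fun j hj =>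
        gapPoint_eq_false_iff.2 (by have := abs_le.1 hj; omega)
    · rw [show i = i - k + k by ring, apply_gapPoint_add_add_eq_of_le hF hinf h0 hN k (by omega)]
      exact hgap.2.2 _ (by omega) (by push_cast at hi; omega)

end Swap

theorem stmt11_general (S : Set ℕ) (hinf : S.Infinite)
    (hnp : ¬ EventuallyPeriodic S)
    (F : (ℤ → Bool) → (ℤ → Bool)) (hF : IsAutomorphism (SGap S) F) :
    F (fun _ => true) = fun _ => true := by
  obtain ⟨hmaps, hcont, hcomm, G, -, -, -, hGF, -⟩ := hF
  have h1X := const_true_mem_SGap hinf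
  obtain ⟨r, hr⟩ := exists_dependsOnWindow_of_continuousOn (isClosed_SGap S).isCompact
    (fun k _ hx => shiftPow_mem_SGap k hx) hcont hcomm
  obtain ⟨b, hb⟩ := exists_eq_const_of_commute_shiftMap hcomm h1X
  cases b
  · have h0X : (fun _ => false) ∈ SGap S := hb ▸ hmaps h1X
    obtain ⟨b', hb'⟩ := exists_eq_const_of_commute_shiftMap hcomm h0X
    cases b'
    · have h01 : (fun _ : ℤ => false) = fun _ => true := by
        rw [← hGF _ h0X, ← hGF _ h1X, hb, hb']
      exact absurd (congrFun h01 0) Bool.false_ne_true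
    · obtain ⟨g, hg⟩ := exists_forall_add_mem_of_swap hr hmaps hinf h0X hb hb'
      exact absurd (eventuallyPeriodic_of_forall_add_mem hg) hnp
  · exact hb

/-- If the `S`-gap shift `X_S` is not sofic (i.e. `S` is infinite and its
characteristic sequence is not eventually periodic), then every automorphism of `X_S` fixes
the point `1^ℤ`. -/
theorem stmt11 (S : Set ℕ) (hS : S.Nonempty) (hinf : S.Infinite)
    (hnp : ¬ EventuallyPeriodic S)
    (F : (ℤ → Bool) → (ℤ → Bool)) (hF : IsAutomorphism (SGap S) F) :
    F (fun _ => true) = fun _ => true :=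
  stmt11_general S hinf hnp F hF
end
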